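/- arXiv:1003.3175 — 8 statements merged into one kernel-verified Lean document; each statement's English description precedes it below -/
import Mathlib

section
/- Let Q be a set with binary operations · , \ and / such that for all x, y in Q: (y/x)·x = y and x/(y\x) = y. Then the identity x·(x\y) = y holds for all x, y in Q. -/
/-- Lemma: identities (C) (y/x)·x = y and (T) x/(y\x) = y imply identity (A) x·(x\y) = y. -/
theorem identity_A_of_CT {Q : Type*} (mul ld rd : Q → Q → Q)
    (hC : ∀ x y, mul (rd y x) x = y)
    (hT : ∀ x y, rd x (ld y x) = y) :
    ∀ x y, mul x (ld x y) = y := by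
  intro x y
  calc mul x (ld x y) = mul (rd y (ld x y)) (ld x y) := by rw [hT y x]
    _ = y := hC (ld x y) y
end

section
/- Let Q be a set with binary operations · , \ and / such that for all x, y in Q: x\(x·y) = y and x/(y\x) = y. Then the identity (y·x)/x = y holds for all x, y in Q. -/
/-- Lemma: identities (B) x\(x·y) = y and (T) x/(y\x) = y imply identity (D) (y·x)/x = y. -/
theorem identity_D_of_BT {Q : Type*} (mul ld rd : Q → Q → Q)
    (hB : ∀ x y, ld x (mul x y) = y)
    (hT : ∀ x y, rd x (ld y x) = y) :
    ∀ x y, rd (mul y x) x = y := by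
  intro x y
  calc rd (mul y x) x = rd (mul y x) (ld y (mul y x)) := by rw [hB]
    _ = y := hT (mul y x) y
end

section
/- Let Q be a set with binary operations · , \ and / such that for all x, y in Q: (y·x)/x = y and (x/y)\x = y. Then the identity x\(x·y) = y holds for all x, y in Q. -/
/-- Lemma: identities (D) (y·x)/x = y and (R) (x/y)\x = y imply identity (B) x\(x·y) = y. -/
theorem identity_B_of_DR {Q : Type*} (mul ld rd : Q → Q → Q)
    (hD : ∀ x y, rd (mul y x) x = y)
    (hR : ∀ x y, ld (rd x y) x = y) :
    ∀ x y, ld x (mul x y) = y := by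
  intro x y
  simpa only [hD y x] using hR (mul x y) y
end

section
/- Let Q be a set with binary operations · , \ and / such that for all x, y in Q: x·(x\y) = y and (x/y)\x = y. Then the identity (y/x)·x = y holds for all x, y in Q. -/
/-- Lemma: identities (A) x·(x\y) = y and (R) (x/y)\x = y imply identity (C) (y/x)·x = y. -/
theorem identity_C_of_AR {Q : Type*} (mul ld rd : Q → Q → Q)
    (hA : ∀ x y, mul x (ld x y) = y)
    (hR : ∀ x y, ld (rd x y) x = y) :
    ∀ x y, mul (rd y x) x = y := fun x y =>
  calc mul (rd y x) x = mul (rd y x) (ld (rd y x) y) := by rw [hR]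
    _ = y := hA (rd y x) y
end

section
/- Let Q be a set with binary operations · , \ and / such that for all x, y in Q: (y/x)·x = y, x\(x·y) = y, and x/(y\x) = y. Then all six quasigroup identities hold in Q; in particular, for all x, y in Q: x·(x\y) = y and (y·x)/x = y (so (Q, ·, \, /) is an equational quasigroup). -/
section BirkhoffIdentities

variable {Q : Type*} (mul ld rd : Q → Q → Q)

theorem mul_ld_eq_of_C_T (hC : ∀ x y, mul (rd y x) x = y) (hT : ∀ x y, rd x (ld y x) = y)
    (x y : Q) : mul x (ld x y) = y := by
  simpa only [hT y x] using hC (ld x y) y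

theorem rd_mul_eq_of_B_T (hB : ∀ x y, ld x (mul x y) = y) (hT : ∀ x y, rd x (ld y x) = y)
    (x y : Q) : rd (mul y x) x = y := by
  simpa only [hB y x] using hT (mul y x) y

theorem ld_rd_eq_of_B_C (hC : ∀ x y, mul (rd y x) x = y) (hB : ∀ x y, ld x (mul x y) = y)
    (x y : Q) : ld (rd x y) x = y := by
  simpa only [hC y x] using hB (rd x y) y

end BirkhoffIdentities

/-- An algebra (Q, ·, \, /) satisfying the given identities satisfies all six
Birkhoff quasigroup identities (A), (C), (B), (D), (T), (R), i.e. it is an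
equational quasigroup. -/
theorem quasigroup_of_CBT {Q : Type*} (mul ld rd : Q → Q → Q)
    (hC : ∀ x y, mul (rd y x) x = y)
    (hB : ∀ x y, ld x (mul x y) = y)
    (hT : ∀ x y, rd x (ld y x) = y) :
    (∀ x y, mul x (ld x y) = y) ∧ (∀ x y, mul (rd y x) x = y) ∧
    (∀ x y, ld x (mul x y) = y) ∧ (∀ x y, rd (mul y x) x = y) ∧
    (∀ x y, rd x (ld y x) = y) ∧ (∀ x y, ld (rd x y) x = y) :=
  ⟨mul_ld_eq_of_C_T mul ld rd hC hT, hC, hB, rd_mul_eq_of_B_T mul ld rd hB hT, hT,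
    ld_rd_eq_of_B_C mul ld rd hC hB⟩
end

section
/- Let Q be a set with binary operations · , \ and / such that for all x, y in Q: x·(x\y) = y, (y·x)/x = y, and (x/y)\x = y. Then all six quasigroup identities hold in Q; in particular, for all x, y in Q: (y/x)·x = y and x\(x·y) = y (so (Q, ·, \, /) is an equational quasigroup). -/
/-! Each missing identity is one of the given identities instantiated at a quotient and then
simplified by another given identity: (C) is (A) at `x := y / x`, simplified by (R);
(B) is (R) at `x := x · y`, simplified by (D); (T) is (D) at `y := y \ x`, simplified by (A). -/

section

variable {Q : Type*} {mul ld rd : Q → Q → Q}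

theorem identity_C_of_A_R (hA : ∀ x y, mul x (ld x y) = y) (hR : ∀ x y, ld (rd x y) x = y)
    (x y : Q) : mul (rd y x) x = y := by
  simpa only [hR] using hA (rd y x) y

theorem identity_B_of_D_R (hD : ∀ x y, rd (mul y x) x = y) (hR : ∀ x y, ld (rd x y) x = y)
    (x y : Q) : ld x (mul x y) = y := by
  simpa only [hD] using hR (mul x y) y

theorem identity_T_of_A_D (hA : ∀ x y, mul x (ld x y) = y) (hD : ∀ x y, rd (mul y x) x = y)
    (x y : Q) : rd x (ld y x) = y := by
  simpa only [hA] using hD (ld y x) y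

end

/-- An algebra (Q, ·, \, /) satisfying the given identities satisfies all six
Birkhoff quasigroup identities (A), (C), (B), (D), (T), (R), i.e. it is an
equational quasigroup. -/
theorem quasigroup_of_ADR {Q : Type*} (mul ld rd : Q → Q → Q)
    (hA : ∀ x y, mul x (ld x y) = y)
    (hD : ∀ x y, rd (mul y x) x = y)
    (hR : ∀ x y, ld (rd x y) x = y) :
    (∀ x y, mul x (ld x y) = y) ∧ (∀ x y, mul (rd y x) x = y) ∧
    (∀ x y, ld x (mul x y) = y) ∧ (∀ x y, rd (mul y x) x = y) ∧
    (∀ x y, rd x (ld y x) = y) ∧ (∀ x y, ld (rd x y) x = y) :=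
  ⟨hA, identity_C_of_A_R hA hR, identity_B_of_D_R hD hR, hD, identity_T_of_A_D hA hD, hR⟩
end

section
/- Let Q be a set with binary operations · , \ and / such that for all x, y in Q: x·(x\y) = y, (y/x)·x = y, x\(x·y) = y, and x/(y\x) = y. Then all six quasigroup identities hold in Q; in particular, (y·x)/x = y for all x, y in Q (so (Q, ·, \, /) is an equational quasigroup). -/
theorem rd_mul_cancel_right {Q : Type*} (mul ld rd : Q → Q → Q)
    (hB : ∀ x y, ld x (mul x y) = y) (hT : ∀ x y, rd x (ld y x) = y) (x y : Q) :
    rd (mul y x) x = y := by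
  simpa only [hB] using hT (mul y x) y

theorem ld_rd_cancel {Q : Type*} (mul ld rd : Q → Q → Q)
    (hC : ∀ x y, mul (rd y x) x = y) (hB : ∀ x y, ld x (mul x y) = y) (x y : Q) :
    ld (rd x y) x = y := by
  simpa only [hC] using hB (rd x y) y

/-- An algebra (Q, ·, \, /) satisfying the given identities satisfies all six
Birkhoff quasigroup identities (A), (C), (B), (D), (T), (R), i.e. it is an
equational quasigroup. -/
theorem quasigroup_of_ACBT {Q : Type*} (mul ld rd : Q → Q → Q)
    (hA : ∀ x y, mul x (ld x y) = y)
    (hC : ∀ x y, mul (rd y x) x = y)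
    (hB : ∀ x y, ld x (mul x y) = y)
    (hT : ∀ x y, rd x (ld y x) = y) :
    (∀ x y, mul x (ld x y) = y) ∧ (∀ x y, mul (rd y x) x = y) ∧
    (∀ x y, ld x (mul x y) = y) ∧ (∀ x y, rd (mul y x) x = y) ∧
    (∀ x y, rd x (ld y x) = y) ∧ (∀ x y, ld (rd x y) x = y) :=
  ⟨hA, hC, hB, rd_mul_cancel_right mul ld rd hB hT, hT, ld_rd_cancel mul ld rd hC hB⟩
end

section
/- Let Q be a set with binary operations · , \ and / such that for all x, y in Q: x·(x\y) = y, x\(x·y) = y, (y·x)/x = y, and (x/y)\x = y. Then all six quasigroup identities hold in Q; in particular, (y/x)·x = y for all x, y in Q (so (Q, ·, \, /) is an equational quasigroup). -/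
/-- An algebra (Q, ·, \, /) satisfying the given identities satisfies all six
Birkhoff quasigroup identities (A), (C), (B), (D), (T), (R), i.e. it is an
equational quasigroup. -/
theorem quasigroup_of_ABDR {Q : Type*} (mul ld rd : Q → Q → Q)
    (hA : ∀ x y, mul x (ld x y) = y)
    (hB : ∀ x y, ld x (mul x y) = y)
    (hD : ∀ x y, rd (mul y x) x = y)
    (hR : ∀ x y, ld (rd x y) x = y) :
    (∀ x y, mul x (ld x y) = y) ∧ (∀ x y, mul (rd y x) x = y) ∧
    (∀ x y, ld x (mul x y) = y) ∧ (∀ x y, rd (mul y x) x = y) ∧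
    (∀ x y, rd x (ld y x) = y) ∧ (∀ x y, ld (rd x y) x = y) :=
  ⟨hA, identity_C_of_A_R hA hR, hB, hD, identity_T_of_A_D hA hD, hR⟩
end
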